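/- Let f be an excursion and ε > 0. Then: d_T[f](t,1) = f(t) − Jf(t) for all t ∈ [0,1]; the function f − Jf is a continuous excursion; Jf and J^ε f are PJG excursions; Δ_t(Jf) = Δ_t(f) and Δ_t(J^ε f) = Δ_t(f)·1_{Δ_t(f) ≥ ε} for all t, so in particular every nonzero jump of J^ε f has height at least ε. Moreover x_s^t(Jf) = x_s^t(f) for all s,t ∈ [0,1]. -/

import Mathlib

open Set Filter Topology
open scoped Classical

noncomputable section

/-- Left limit of `f` at `t`, with the convention `f(0−) = 0`. -/
def lm (f : ℝ → ℝ) (t : ℝ) : ℝ := if t = 0 then 0 else Function.leftLim f t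

/-- The jump `Δ_t(f) = f t − f(t−)`. -/
def jump (f : ℝ → ℝ) (t : ℝ) : ℝ := f t - lm f t

/-- `inf_{[s,t]} f`. -/
def infIcc (f : ℝ → ℝ) (s t : ℝ) : ℝ := sInf (f '' Icc s t)

/-- An excursion: a càdlàg function on `[0,1]`, nonnegative, vanishing at `1` (and
extended by `0` outside `[0,1]`), all of whose jumps are nonnegative. -/
structure IsExcursion (f : ℝ → ℝ) : Prop where
  nonneg : ∀ t ∈ Icc (0:ℝ) 1, 0 ≤ f t
  zero_outside : ∀ t, t ∉ Icc (0:ℝ) 1 → f t = 0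
  rightCont : ∀ t ∈ Ico (0:ℝ) 1, Tendsto f (𝓝[>] t) (𝓝 (f t))
  leftLimEx : ∀ t ∈ Ioc (0:ℝ) 1, Tendsto f (𝓝[<] t) (𝓝 (Function.leftLim f t))
  one : f 1 = 0
  jump_nonneg : ∀ t ∈ Icc (0:ℝ) 1, 0 ≤ jump f t

/-- The genealogical relation `s ⪯_f t` : `s ≤ t` and `f(s−) ≤ inf_{[s,t]} f`. -/
def pre (f : ℝ → ℝ) (s t : ℝ) : Prop := s ≤ t ∧ lm f s ≤ infIcc f s t

/-- `x_s^t(f) = 1_{s ≤ t} · max(inf_{[s,t]} f − f(s−), 0)`. -/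
def xst (f : ℝ → ℝ) (s t : ℝ) : ℝ := if s ≤ t then max (infIcc f s t - lm f s) 0 else 0

/-- The most recent common ancestor `s ∧_f t`. -/
def mrca (f : ℝ → ℝ) (s t : ℝ) : ℝ := sSup {r : ℝ | 0 ≤ r ∧ pre f r s ∧ pre f r t}

/-- `δ_t(a,b) = min(|a−b|, Δ_t(f) − |a−b|)`, the circle pseudo-distance on `[0, Δ_t(f)]`. -/
def cdel (f : ℝ → ℝ) (t a b : ℝ) : ℝ := min |a - b| (jump f t - |a - b|)

/-- `d_O(s,t) = ∑_{s ≺_f r ⪯_f t} δ_r(0, x_r^t)`. -/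
def dO (f : ℝ → ℝ) (s t : ℝ) : ℝ :=
  ∑' r : ℝ, if pre f s r ∧ s < r ∧ pre f r t then cdel f r 0 (xst f r t) else 0

/-- `d_T(s,t) = f t − inf_{[s,t]} f − ∑_{s ≺_f r ⪯_f t} x_r^t`, intended for `s ⪯_f t`. -/
def dTanc (f : ℝ → ℝ) (s t : ℝ) : ℝ :=
  f t - infIcc f s t - ∑' r : ℝ, if pre f s r ∧ s < r ∧ pre f r t then xst f r t else 0

/-- The looptree pseudo-distance `d_L[f]`. -/
def dL (f : ℝ → ℝ) (s t : ℝ) : ℝ :=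
  cdel f (mrca f s t) (xst f (mrca f s t) s) (xst f (mrca f s t) t)
    + dO f (mrca f s t) s + dO f (mrca f s t) t

/-- The tree pseudo-distance `d_T[f]`. -/
def dT (f : ℝ → ℝ) (s t : ℝ) : ℝ := dTanc f (mrca f s t) s + dTanc f (mrca f s t) t

/-- The vernation pseudo-distance `d_V[f] = d_T[f] + 2·d_L[f]`. -/
def dV (f : ℝ → ℝ) (s t : ℝ) : ℝ := dT f s t + 2 * dL f s t

/-- `Jf(t) = ∑_{r ⪯_f t} x_r^t(f)`. -/
def Jop (f : ℝ → ℝ) (t : ℝ) : ℝ := ∑' r : ℝ, if pre f r t then xst f r t else 0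

/-- `J^ε f(t) = ∑_{r ⪯_f t, Δ_r(f) ≥ ε} x_r^t(f)`. -/
def Jeps (f : ℝ → ℝ) (ε : ℝ) (t : ℝ) : ℝ :=
  ∑' r : ℝ, if pre f r t ∧ ε ≤ jump f r then xst f r t else 0

/-- Pure jump growth (PJG) excursion: `f(t) = ∑_{r ⪯_f t} x_r^t(f)` on `[0,1]`. -/
def IsPJG (f : ℝ → ℝ) : Prop := ∀ t ∈ Icc (0:ℝ) 1, f t = Jop f t

/-- An increasing bijection from `[0,1]` onto itself. -/
def IncBij (l : ℝ → ℝ) : Prop :=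
  StrictMonoOn l (Icc (0:ℝ) 1) ∧ Set.BijOn l (Icc (0:ℝ) 1) (Icc (0:ℝ) 1)

/-- The Skorokhod distance `ρ` on functions `[0,1] → ℝ`. -/
def skor (f g : ℝ → ℝ) : ℝ :=
  sInf {c : ℝ | 0 ≤ c ∧ ∃ l : ℝ → ℝ, IncBij l ∧
    ∀ x ∈ Icc (0:ℝ) 1, |l x - x| ≤ c ∧ |f x - g (l x)| ≤ c}


/-!
For `r ⪯_f t` the intervals `[f(r−), inf_{[r,t]} f]` are stacked without overlap inside
`[0, f t]`: for `r < r' ≤ t` one has `inf_{[r,t]} f ≤ f(r'−)`. Hence the sums defining `Jf` and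
`J^ε f` converge, and the parts of these intervals above any level `v` have total length at most
`f t - v`. Comparing the sums at times `s ≤ t` with this estimate bounds the increments of
`J_S f t = ∑_{r ∈ S, r ⪯_f t} x_r^t(f)` by differences such as `f s - inf_{[s,t]} f`,
which vanish in one-sided limits as `f` is càdlàg; so `J_S f` is càdlàg with
`Δ_t(J_S f) = 1_S(t) Δ_t(f)`. The same estimates give
`inf_{[s,t]} J_S f = J_S f(s−) + 1_S(s) x_s^t(f)` when `s ⪯_f t`, so
`x_s^t(J_S f) = 1_S(s) x_s^t(f)`, which is the PJG property. Finally, the most recent common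
ancestor `m` of `t` and `1` has `f(m−) = 0`, so ancestors of `t` before `m` contribute nothing to
`Jf t`, and the rest of `Jf t` is what `d_T(m, t)` subtracts from `f t - inf_{[m,t]} f`.
-/

section

variable {f : ℝ → ℝ} {r s t v : ℝ}

theorem infIcc_self (f : ℝ → ℝ) (t : ℝ) : infIcc f t t = f t := by
  rw [infIcc, Icc_self, image_singleton, csInf_singleton]

theorem le_infIcc (hst : s ≤ t) (h : ∀ u ∈ Icc s t, v ≤ f u) : v ≤ infIcc f s t :=
  le_csInf ((nonempty_Icc.2 hst).image f) <| by rintro _ ⟨u, hu, rfl⟩; exact h u hu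

theorem exists_lt_infIcc_add (hst : s ≤ t) {d : ℝ} (hd : 0 < d) :
    ∃ u ∈ Icc s t, f u < infIcc f s t + d := by
  obtain ⟨_, ⟨u, hu, rfl⟩, hlt⟩ :=
    exists_lt_of_csInf_lt ((nonempty_Icc.2 hst).image f) (lt_add_of_pos_right _ hd)
  exact ⟨u, hu, hlt⟩

theorem xst_nonneg (f : ℝ → ℝ) (r t : ℝ) : 0 ≤ xst f r t := by
  unfold xst; split_ifs
  exacts [le_max_right _ _, le_rfl]

theorem xst_of_lt (f : ℝ → ℝ) (h : t < r) : xst f r t = 0 := if_neg h.not_ge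

theorem xst_eq_zero_of_not_pre (h : ¬ pre f r t) : xst f r t = 0 := by
  unfold xst pre at *
  split_ifs with hrt
  · exact max_eq_right (by linarith [not_le.1 fun h' => h ⟨hrt, h'⟩])
  · rfl

theorem ite_pre_xst (f : ℝ → ℝ) (r t : ℝ) : (if pre f r t then xst f r t else 0) = xst f r t :=
  ite_eq_left_iff.2 fun h => (xst_eq_zero_of_not_pre h).symm

theorem Jop_eq_tsum_xst (f : ℝ → ℝ) (t : ℝ) : Jop f t = ∑' r, xst f r t :=
  tsum_congr fun r => ite_pre_xst f r t

theorem sum_max_sub_max_le_of_sorted {S : Finset ℝ} {a b : ℝ → ℝ} {w : ℝ}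
    (hab : ∀ r ∈ S, ∀ r' ∈ S, r < r' → b r ≤ a r') (hw : ∀ r ∈ S, b r ≤ w) :
    ∑ r ∈ S, max (b r - max (a r) v) 0 ≤ max (w - v) 0 := by
  induction S using Finset.induction_on_max generalizing w with
  | empty => simp
  | insert m S hlt ih =>
    have hS := ih (w := min (a m) w)
      (fun r hr r' hr' h => hab r (Finset.mem_insert_of_mem hr) r' (Finset.mem_insert_of_mem hr') h)
      (fun r hr => le_min (hab r (Finset.mem_insert_of_mem hr) m (Finset.mem_insert_self m S)
        (hlt r hr)) (hw r (Finset.mem_insert_of_mem hr)))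
    have hm := hw m (Finset.mem_insert_self m S)
    have : max (b m - max (a m) v) 0 + max (min (a m) w - v) 0 ≤ max (w - v) 0 := by
      simp only [max_def, min_def]; split_ifs <;> linarith
    rw [Finset.sum_insert fun h => (hlt m h).false]
    linarith

def xstAbove (f : ℝ → ℝ) (v r t : ℝ) : ℝ := max (infIcc f r t - max (lm f r) v) 0

theorem xstAbove_nonneg (f : ℝ → ℝ) (v r t : ℝ) : 0 ≤ xstAbove f v r t := le_max_right _ _

theorem xst_eq_xstAbove (hrt : r ≤ t) (hv : v ≤ lm f r) : xst f r t = xstAbove f v r t := by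
  rw [xst, if_pos hrt, xstAbove, max_eq_left hv]

/-- `∑_{r ∈ S, r ⪯_f t} x_r^t(f)`: the condition `r ⪯_f t` can be dropped since `x_r^t(f) = 0`
otherwise. -/
def jumpSum (f : ℝ → ℝ) (S : Set ℝ) (t : ℝ) : ℝ := ∑' r, S.indicator (fun r => xst f r t) r

theorem Jop_eq_jumpSum (f : ℝ → ℝ) : Jop f = jumpSum f univ := by
  ext t; simp [Jop_eq_tsum_xst, jumpSum]

theorem Jeps_eq_jumpSum (f : ℝ → ℝ) (ε : ℝ) : Jeps f ε = jumpSum f {r | ε ≤ jump f r} := by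
  ext t
  refine tsum_congr fun r => ?_
  by_cases hr : ε ≤ jump f r <;> simp [hr, ite_pre_xst]

theorem jumpSum_nonneg (f : ℝ → ℝ) (S : Set ℝ) (t : ℝ) : 0 ≤ jumpSum f S t :=
  tsum_nonneg <| indicator_nonneg fun r _ => xst_nonneg f r t

theorem jumpSum_inter_Iic (f : ℝ → ℝ) (S : Set ℝ) (t : ℝ) :
    jumpSum f (S ∩ Iic t) t = jumpSum f S t := by
  refine tsum_congr fun r => ?_
  rcases le_or_gt r t with hrt | htr
  · simp [indicator_apply, hrt]
  · simp [indicator_apply, htr.not_ge, xst_of_lt f htr]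

theorem indicator_xst_eq_indicator_xstAbove {T : Set ℝ} (hT : ∀ r ∈ T, r ≤ t → v ≤ lm f r) :
    T.indicator (fun r => xst f r t) = (T ∩ Iic t).indicator (fun r => xstAbove f v r t) := by
  ext r
  by_cases hr : r ∈ T
  · rcases le_or_gt r t with hrt | htr
    · simp [hr, hrt, xst_eq_xstAbove hrt (hT r hr hrt)]
    · simp [hr, htr.not_ge, xst_of_lt f htr]
  · simp [hr]

theorem tendsto_max_sub_zero {l : Filter ℝ} {a : ℝ} {g h : ℝ → ℝ} (hg : Tendsto g l (𝓝 a))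
    (hh : Tendsto h l (𝓝 a)) : Tendsto (fun s => max (g s - h s) 0) l (𝓝 0) := by
  simpa using (hg.sub hh).max (tendsto_const_nhds (x := (0:ℝ)))

end

namespace IsExcursion

variable {f g : ℝ → ℝ} {S T : Set ℝ} {r s t u v w x : ℝ}

theorem apply_nonneg (hf : IsExcursion f) (x : ℝ) : 0 ≤ f x := by
  by_cases hx : x ∈ Icc (0:ℝ) 1
  · exact hf.nonneg x hx
  · rw [hf.zero_outside x hx]

theorem eventuallyEq_zero_nhdsLT (hf : IsExcursion f) (hx : x ∉ Ioc (0:ℝ) 1) :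
    f =ᶠ[𝓝[<] x] 0 := by
  rcases not_and_or.1 hx with hx | hx
  · filter_upwards [self_mem_nhdsWithin] with u hu
    exact hf.zero_outside u fun h => by linarith [h.1, hu.out, not_lt.1 hx]
  · filter_upwards [Ioo_mem_nhdsLT (not_le.1 hx)] with u hu
    exact hf.zero_outside u fun h => by linarith [h.2, hu.1]

theorem tendsto_lm (hf : IsExcursion f) (x : ℝ) : Tendsto f (𝓝[<] x) (𝓝 (lm f x)) := by
  by_cases hx : x ∈ Ioc (0:ℝ) 1
  · rw [lm, if_neg hx.1.ne']
    exact hf.leftLimEx x hx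
  · have h0 : Tendsto f (𝓝[<] x) (𝓝 0) :=
      tendsto_const_nhds.congr' (hf.eventuallyEq_zero_nhdsLT hx).symm
    by_cases hx0 : x = 0
    · rwa [lm, if_pos hx0]
    · rwa [lm, if_neg hx0, leftLim_eq_of_tendsto h0]

theorem lm_nonneg (hf : IsExcursion f) (x : ℝ) : 0 ≤ lm f x :=
  ge_of_tendsto (hf.tendsto_lm x) (Eventually.of_forall hf.apply_nonneg)

theorem lm_le (hf : IsExcursion f) (x : ℝ) : lm f x ≤ f x := by
  by_cases hx : x ∈ Icc (0:ℝ) 1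
  · simpa [jump] using hf.jump_nonneg x hx
  · have h0 : Tendsto f (𝓝[<] x) (𝓝 0) := tendsto_const_nhds.congr'
      (hf.eventuallyEq_zero_nhdsLT fun h => hx (Ioc_subset_Icc_self h)).symm
    rw [tendsto_nhds_unique (hf.tendsto_lm x) h0, hf.zero_outside x hx]

theorem jump_nonneg' (hf : IsExcursion f) (x : ℝ) : 0 ≤ jump f x :=
  sub_nonneg.2 (hf.lm_le x)

theorem bddBelow_image (hf : IsExcursion f) (s t : ℝ) : BddBelow (f '' Icc s t) :=
  ⟨0, by rintro _ ⟨u, -, rfl⟩; exact hf.apply_nonneg u⟩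

theorem infIcc_nonneg (hf : IsExcursion f) (s t : ℝ) : 0 ≤ infIcc f s t :=
  Real.sInf_nonneg <| by rintro _ ⟨u, -, rfl⟩; exact hf.apply_nonneg u

theorem infIcc_le (hf : IsExcursion f) (hsu : s ≤ u) (hut : u ≤ t) : infIcc f s t ≤ f u :=
  csInf_le (hf.bddBelow_image s t) ⟨u, ⟨hsu, hut⟩, rfl⟩

theorem infIcc_eq_min (hf : IsExcursion f) (hsu : s ≤ u) (hut : u ≤ t) :
    infIcc f s t = min (infIcc f s u) (infIcc f u t) := by
  rw [infIcc, ← Icc_union_Icc_eq_Icc hsu hut, image_union,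
    csInf_union (hf.bddBelow_image s u) ((nonempty_Icc.2 hsu).image f)
      (hf.bddBelow_image u t) ((nonempty_Icc.2 hut).image f), infIcc, infIcc]

theorem infIcc_le_infIcc_right (hf : IsExcursion f) (hsu : s ≤ u) (hut : u ≤ t) :
    infIcc f s t ≤ infIcc f s u :=
  (hf.infIcc_eq_min hsu hut).trans_le (min_le_left _ _)

theorem infIcc_eq_zero (hf : IsExcursion f) (hsu : s ≤ u) (hut : u ≤ t) (hu : f u = 0) :
    infIcc f s t = 0 :=
  le_antisymm (hu ▸ hf.infIcc_le hsu hut) (hf.infIcc_nonneg s t)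

theorem infIcc_le_lm (hf : IsExcursion f) (hsr : s < r) (hrt : r ≤ t) : infIcc f s t ≤ lm f r :=
  ge_of_tendsto (hf.tendsto_lm r) <| by
    filter_upwards [Ioo_mem_nhdsLT hsr] with u hu
    exact hf.infIcc_le hu.1.le (hu.2.le.trans hrt)

theorem tendsto_infIcc_nhdsLT (hf : IsExcursion f) (t : ℝ) :
    Tendsto (fun s => infIcc f s t) (𝓝[<] t) (𝓝 (lm f t)) := by
  refine tendsto_order.2 ⟨fun a ha => ?_, fun b hb => ?_⟩
  · obtain ⟨a', haa', ha't⟩ := exists_between ha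
    obtain ⟨l, hlt, hl⟩ := mem_nhdsLT_iff_exists_Ioo_subset.1
      ((tendsto_order.1 (hf.tendsto_lm t)).1 a' ha't)
    filter_upwards [Ioo_mem_nhdsLT hlt] with s hs
    refine haa'.trans_le (le_infIcc hs.2.le fun u hu => ?_)
    rcases hu.2.lt_or_eq with hut | rfl
    · exact (hl ⟨hs.1.trans_le hu.1, hut⟩).le
    · exact ha't.le.trans (hf.lm_le u)
  · filter_upwards [self_mem_nhdsWithin] with s hs
    exact (hf.infIcc_le_lm hs le_rfl).trans_lt hb

theorem tendsto_infIcc_nhdsGT (hf : IsExcursion f) (ht : Tendsto f (𝓝[>] t) (𝓝 (f t))) :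
    Tendsto (fun s => infIcc f t s) (𝓝[>] t) (𝓝 (f t)) := by
  refine tendsto_order.2 ⟨fun a ha => ?_, fun b hb => ?_⟩
  · obtain ⟨a', haa', ha't⟩ := exists_between ha
    obtain ⟨l, hlt, hl⟩ := mem_nhdsGT_iff_exists_Ioo_subset.1
      ((tendsto_order.1 ht).1 a' ha't)
    filter_upwards [Ioo_mem_nhdsGT hlt] with s hs
    refine haa'.trans_le (le_infIcc hs.1.le fun u hu => ?_)
    rcases hu.1.lt_or_eq with htu | rfl
    · exact (hl ⟨htu, hu.2.trans_lt hs.2⟩).le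
    · exact ha't.le
  · filter_upwards [self_mem_nhdsWithin] with s hs
    exact (hf.infIcc_le le_rfl (le_of_lt hs)).trans_lt hb

theorem xst_eq_zero (hf : IsExcursion f) (hru : r ≤ u) (hut : u ≤ t) (hu : f u = 0) :
    xst f r t = 0 := by
  rw [xst, if_pos (hru.trans hut), hf.infIcc_eq_zero hru hut hu]
  exact max_eq_right (by linarith [hf.lm_nonneg r])

theorem xst_self (hf : IsExcursion f) (t : ℝ) : xst f t t = jump f t := by
  rw [xst, if_pos le_rfl, infIcc_self, ← jump, max_eq_left (hf.jump_nonneg' t)]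

theorem xst_anti (hf : IsExcursion f) (hrs : r ≤ s) (hst : s ≤ t) : xst f r t ≤ xst f r s := by
  rw [xst, xst, if_pos (hrs.trans hst), if_pos hrs]
  exact max_le_max (sub_le_sub_right (hf.infIcc_le_infIcc_right hrs hst) _) le_rfl

theorem xst_le_xst_add_xstAbove (hf : IsExcursion f) (hrs : r ≤ s) (hst : s ≤ t) :
    xst f r s ≤ xst f r t + xstAbove f (infIcc f s t) r s := by
  rw [xst, xst, if_pos hrs, if_pos (hrs.trans hst), hf.infIcc_eq_min hrs hst, xstAbove]
  simp only [max_def, min_def]; split_ifs <;> linarith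

theorem sum_indicator_xstAbove_le (hf : IsExcursion f) (hT : ∀ r ∈ T, r ≤ t ∧ infIcc f r t ≤ w)
    (F : Finset ℝ) : ∑ r ∈ F, T.indicator (fun r => xstAbove f v r t) r ≤ max (w - v) 0 := by
  rw [Finset.sum_indicator_eq_sum_filter]
  exact sum_max_sub_max_le_of_sorted
    (fun r _ r' hr' h => hf.infIcc_le_lm h (hT r' (Finset.mem_filter.1 hr').2).1)
    (fun r hr => (hT r (Finset.mem_filter.1 hr).2).2)

theorem summable_indicator_xstAbove (hf : IsExcursion f)
    (hT : ∀ r ∈ T, r ≤ t ∧ infIcc f r t ≤ w) :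
    Summable (T.indicator fun r => xstAbove f v r t) :=
  summable_of_sum_le (indicator_nonneg fun r _ => xstAbove_nonneg f v r t)
    (hf.sum_indicator_xstAbove_le hT)

theorem tsum_indicator_xstAbove_le (hf : IsExcursion f)
    (hT : ∀ r ∈ T, r ≤ t ∧ infIcc f r t ≤ w) :
    ∑' r, T.indicator (fun r => xstAbove f v r t) r ≤ max (w - v) 0 :=
  Real.tsum_le_of_sum_le (indicator_nonneg fun r _ => xstAbove_nonneg f v r t)
    (hf.sum_indicator_xstAbove_le hT)

theorem summable_indicator_xst (hf : IsExcursion f) (S : Set ℝ) (t : ℝ) :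
    Summable (S.indicator fun r => xst f r t) := by
  rw [indicator_xst_eq_indicator_xstAbove (v := 0) fun r _ _ => hf.lm_nonneg r]
  exact hf.summable_indicator_xstAbove fun r hr => ⟨hr.2, hf.infIcc_le hr.2 le_rfl⟩

theorem jumpSum_le (hf : IsExcursion f) (hT : ∀ r ∈ T, r ≤ u → v ≤ lm f r ∧ infIcc f r u ≤ w) :
    jumpSum f T u ≤ max (w - v) 0 := by
  rw [jumpSum, indicator_xst_eq_indicator_xstAbove fun r hr hru => (hT r hr hru).1]
  exact hf.tsum_indicator_xstAbove_le fun r hr => ⟨hr.2, (hT r hr.1 hr.2).2⟩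

theorem jumpSum_le_self (hf : IsExcursion f) (S : Set ℝ) (t : ℝ) : jumpSum f S t ≤ f t := by
  refine (hf.jumpSum_le (v := 0) fun r _ hrt => ⟨hf.lm_nonneg r, hf.infIcc_le hrt le_rfl⟩).trans ?_
  rw [sub_zero, max_eq_left (hf.apply_nonneg t)]

theorem jumpSum_eq_zero (hf : IsExcursion f) (S : Set ℝ) (ht : f t = 0) : jumpSum f S t = 0 :=
  le_antisymm (ht ▸ hf.jumpSum_le_self S t) (jumpSum_nonneg f S t)

theorem jumpSum_mono (hf : IsExcursion f) (hST : S ⊆ T) (t : ℝ) :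
    jumpSum f S t ≤ jumpSum f T t :=
  Summable.tsum_le_tsum (indicator_le_indicator_of_subset hST fun r => xst_nonneg f r t)
    (hf.summable_indicator_xst S t) (hf.summable_indicator_xst T t)

theorem jumpSum_inter_add_diff (hf : IsExcursion f) (S A : Set ℝ) (t : ℝ) :
    jumpSum f (S ∩ A) t + jumpSum f (S \ A) t = jumpSum f S t := by
  rw [jumpSum, jumpSum, ← Summable.tsum_add (hf.summable_indicator_xst _ t)
    (hf.summable_indicator_xst _ t), jumpSum]
  refine tsum_congr fun r => ?_
  by_cases hS : r ∈ S <;> by_cases hA : r ∈ A <;> simp [hS, hA]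

theorem jumpSum_anti (hf : IsExcursion f) (hT : ∀ r ∈ T, r ≤ s) (hst : s ≤ t) :
    jumpSum f T t ≤ jumpSum f T s :=
  Summable.tsum_le_tsum
    (fun r => by
      by_cases hr : r ∈ T
      · simpa [hr] using hf.xst_anti (hT r hr) hst
      · simp [hr])
    (hf.summable_indicator_xst T t) (hf.summable_indicator_xst T s)

theorem jumpSum_le_add {A : Set ℝ} {c : ℝ} (hf : IsExcursion f) (hA : A ⊆ Iic c) (hcu : c ≤ u)
    (S : Set ℝ) : jumpSum f S u ≤ jumpSum f (S ∩ A) c + jumpSum f (S \ A) u := by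
  rw [← hf.jumpSum_inter_add_diff S A u]
  exact add_le_add (hf.jumpSum_anti (T := S ∩ A) (fun r hr => hA hr.2) hcu) le_rfl

theorem jumpSum_le_jumpSum_add (hf : IsExcursion f) (hst : s ≤ t)
    (hw : ∀ r ∈ S, r ≤ s → infIcc f r s ≤ w) :
    jumpSum f S s ≤ jumpSum f (S ∩ Iic s) t + max (w - infIcc f s t) 0 := by
  have hT : ∀ r ∈ S ∩ Iic s, r ≤ s ∧ infIcc f r s ≤ w := fun r hr => ⟨hr.2, hw r hr.1 hr.2⟩
  calc jumpSum f S s = ∑' r, (S ∩ Iic s).indicator (fun r => xst f r s) r :=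
        (jumpSum_inter_Iic f S s).symm
    _ ≤ ∑' r, ((S ∩ Iic s).indicator (fun r => xst f r t) r
          + (S ∩ Iic s).indicator (fun r => xstAbove f (infIcc f s t) r s) r) := by
        refine Summable.tsum_le_tsum (fun r => ?_) (hf.summable_indicator_xst _ s)
          ((hf.summable_indicator_xst _ t).add (hf.summable_indicator_xstAbove hT))
        by_cases hr : r ∈ S ∩ Iic s
        · simpa [indicator_of_mem hr] using hf.xst_le_xst_add_xstAbove hr.2 hst
        · simp [indicator_of_notMem hr]
    _ ≤ jumpSum f (S ∩ Iic s) t + max (w - infIcc f s t) 0 := by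
        rw [Summable.tsum_add (hf.summable_indicator_xst _ t) (hf.summable_indicator_xstAbove hT)]
        exact add_le_add le_rfl (hf.tsum_indicator_xstAbove_le hT)

theorem jumpSum_eq_add_jump (hf : IsExcursion f) (S : Set ℝ) (t : ℝ) :
    jumpSum f S t = jumpSum f (S ∩ Iio t) t + S.indicator (jump f) t := by
  rw [← hf.jumpSum_inter_add_diff S (Iio t) t]
  congr 1
  rw [jumpSum, tsum_eq_single t]
  · by_cases ht : t ∈ S <;> simp [ht, hf.xst_self]
  · intro r hrt
    by_cases hr : r ∈ S \ Iio t
    · simp [hr, xst_of_lt f (lt_of_le_of_ne (not_lt.1 hr.2) hrt.symm)]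
    · simp [hr]

theorem tendsto_jumpSum_nhdsGT (hf : IsExcursion f) (S : Set ℝ)
    (ht : Tendsto f (𝓝[>] t) (𝓝 (f t))) :
    Tendsto (jumpSum f S) (𝓝[>] t) (𝓝 (jumpSum f S t)) := by
  have hinf := hf.tendsto_infIcc_nhdsGT ht
  have hlow := (tendsto_const_nhds (x := jumpSum f S t)).sub
    (tendsto_max_sub_zero tendsto_const_nhds hinf)
  have hup := (tendsto_const_nhds (x := jumpSum f S t)).add (tendsto_max_sub_zero ht hinf)
  rw [sub_zero] at hlow
  rw [add_zero] at hup
  refine tendsto_of_tendsto_of_tendsto_of_le_of_le' hlow hup ?_ ?_ <;>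
    filter_upwards [self_mem_nhdsWithin] with s (hts : t < s)
  · have h1 := hf.jumpSum_le_jumpSum_add (S := S) hts.le fun r _ hrt => hf.infIcc_le hrt le_rfl
    have h2 := hf.jumpSum_mono (inter_subset_left (s := S) (t := Iic t)) s
    linarith
  · have h1 := hf.jumpSum_le_add (subset_refl (Iic t)) hts.le S
    have h2 := hf.jumpSum_mono (inter_subset_left (s := S) (t := Iic t)) t
    have h3 := hf.jumpSum_le (T := S \ Iic t) (v := infIcc f t s) (w := f s) fun r hr hrs =>
      ⟨hf.infIcc_le_lm (not_le.1 hr.2) hrs, hf.infIcc_le hrs le_rfl⟩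
    linarith

theorem tendsto_jumpSum_nhdsLT (hf : IsExcursion f) (S : Set ℝ) (t : ℝ) :
    Tendsto (jumpSum f S) (𝓝[<] t) (𝓝 (jumpSum f (S ∩ Iio t) t)) := by
  have hinf := hf.tendsto_infIcc_nhdsLT t
  have hlow := (tendsto_const_nhds (x := jumpSum f (S ∩ Iio t) t)).sub
    (tendsto_max_sub_zero tendsto_const_nhds hinf)
  have hup := (tendsto_const_nhds (x := jumpSum f (S ∩ Iio t) t)).add
    (tendsto_max_sub_zero (hf.tendsto_lm t) hinf)
  rw [sub_zero] at hlow
  rw [add_zero] at hup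
  refine tendsto_of_tendsto_of_tendsto_of_le_of_le' hlow hup ?_ ?_ <;>
    filter_upwards [self_mem_nhdsWithin] with s (hst : s < t)
  · have h1 := hf.jumpSum_le_add (subset_refl (Iic s)) hst.le (S ∩ Iio t)
    have h2 := hf.jumpSum_mono (fun r (hr : r ∈ S ∩ Iio t ∩ Iic s) => hr.1.1) s
    have h3 := hf.jumpSum_le (T := (S ∩ Iio t) \ Iic s) (v := infIcc f s t) (w := lm f t)
      fun r hr hrt => ⟨hf.infIcc_le_lm (not_le.1 hr.2) hrt, hf.infIcc_le_lm hr.1.2 le_rfl⟩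
    linarith
  · have h1 := hf.jumpSum_le_jumpSum_add (S := S) hst.le fun r _ hrs => hf.infIcc_le hrs le_rfl
    have h2 := hf.jumpSum_mono (T := S ∩ Iio t)
      (fun r (hr : r ∈ S ∩ Iic s) => ⟨hr.1, hr.2.trans_lt hst⟩) t
    linarith

theorem lm_jumpSum (hf : IsExcursion f) (S : Set ℝ) (t : ℝ) :
    lm (jumpSum f S) t = jumpSum f (S ∩ Iio t) t := by
  by_cases ht : t = 0
  · subst ht
    rw [lm, if_pos rfl]
    refine (le_antisymm ?_ (jumpSum_nonneg f _ 0)).symm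
    simpa using hf.jumpSum_le (T := S ∩ Iio 0) (v := 0) (w := 0) fun r hr _ =>
      ⟨hf.lm_nonneg r, (hf.infIcc_le le_rfl hr.2.le).trans_eq (hf.zero_outside r fun h => by
        linarith [h.1, hr.2.out])⟩
  · rw [lm, if_neg ht]
    exact leftLim_eq_of_tendsto (hf.tendsto_jumpSum_nhdsLT S t)

theorem jump_jumpSum (hf : IsExcursion f) (S : Set ℝ) (t : ℝ) :
    jump (jumpSum f S) t = S.indicator (jump f) t := by
  rw [jump, hf.lm_jumpSum, hf.jumpSum_eq_add_jump S t]
  ring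

theorem isExcursion_jumpSum (hf : IsExcursion f) (S : Set ℝ) : IsExcursion (jumpSum f S) where
  nonneg t _ := jumpSum_nonneg f S t
  zero_outside t ht := hf.jumpSum_eq_zero S (hf.zero_outside t ht)
  rightCont t ht := hf.tendsto_jumpSum_nhdsGT S (hf.rightCont t ht)
  leftLimEx t _ := by
    rw [leftLim_eq_of_tendsto (hf.tendsto_jumpSum_nhdsLT S t)]
    exact hf.tendsto_jumpSum_nhdsLT S t
  one := hf.jumpSum_eq_zero S hf.one
  jump_nonneg t _ := by
    rw [hf.jump_jumpSum]
    exact indicator_nonneg (fun r _ => hf.jump_nonneg' r) t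

theorem lm_sub (hf : IsExcursion f) (hg : IsExcursion g) (t : ℝ) :
    lm (fun u => f u - g u) t = lm f t - lm g t := by
  by_cases ht : t = 0
  · simp [lm, ht]
  · rw [lm, if_neg ht]
    exact leftLim_eq_of_tendsto ((hf.tendsto_lm t).sub (hg.tendsto_lm t))

theorem jump_sub (hf : IsExcursion f) (hg : IsExcursion g) (t : ℝ) :
    jump (fun u => f u - g u) t = jump f t - jump g t := by
  rw [jump, hf.lm_sub hg, jump, jump]
  ring

theorem isExcursion_sub_jumpSum (hf : IsExcursion f) (S : Set ℝ) :
    IsExcursion (fun t => f t - jumpSum f S t) where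
  nonneg t _ := sub_nonneg.2 (hf.jumpSum_le_self S t)
  zero_outside t ht := by simp [hf.zero_outside t ht, hf.jumpSum_eq_zero S (hf.zero_outside t ht)]
  rightCont t ht := (hf.rightCont t ht).sub ((hf.isExcursion_jumpSum S).rightCont t ht)
  leftLimEx t ht := by
    have h := (hf.leftLimEx t ht).sub ((hf.isExcursion_jumpSum S).leftLimEx t ht)
    rwa [leftLim_eq_of_tendsto h]
  one := by simp [hf.one, hf.jumpSum_eq_zero S hf.one]
  jump_nonneg t _ := by
    rw [hf.jump_sub (hf.isExcursion_jumpSum S), hf.jump_jumpSum, sub_nonneg]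
    by_cases ht : t ∈ S
    · rw [indicator_of_mem ht]
    · rw [indicator_of_notMem ht]
      exact hf.jump_nonneg' t

theorem jumpSum_le_jumpSum_Iio_add (hf : IsExcursion f) (hsu : s ≤ u) (hv : v ≤ infIcc f s u)
    (hvs : s ∈ S → v ≤ lm f s) :
    jumpSum f S u ≤ jumpSum f (S ∩ Iio s) s + max (f u - v) 0 := by
  have h1 := hf.jumpSum_le_add Iio_subset_Iic_self hsu S
  have h2 := hf.jumpSum_le (T := S \ Iio s) (v := v) (w := f u) fun r hr hru => by
    refine ⟨?_, hf.infIcc_le hru le_rfl⟩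
    rcases (not_lt.1 (show ¬ r < s from hr.2)).eq_or_lt with rfl | hsr
    · exact hvs hr.1
    · exact hv.trans (hf.infIcc_le_lm hsr hru)
  linarith

theorem infIcc_jumpSum_le (hf : IsExcursion f) (S : Set ℝ) (hst : s ≤ t) :
    infIcc (jumpSum f S) s t ≤ jumpSum f (S ∩ Iio s) s + S.indicator (fun r => xst f r t) s := by
  refine le_of_forall_pos_le_add fun d hd => ?_
  obtain ⟨u, hu, hfu⟩ := exists_lt_infIcc_add (f := f) hst hd
  have hGu := (hf.isExcursion_jumpSum S).infIcc_le hu.1 hu.2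
  have hsut := hf.infIcc_le_infIcc_right hu.1 hu.2
  have hfu' := hf.infIcc_le hu.1 hu.2
  by_cases hs : s ∈ S
  · have h := hf.jumpSum_le_jumpSum_Iio_add (S := S) (v := min (lm f s) (infIcc f s t)) hu.1
      ((min_le_right _ _).trans hsut) fun _ => min_le_left _ _
    have : max (f u - min (lm f s) (infIcc f s t)) 0 ≤ max (infIcc f s t - lm f s) 0 + d := by
      simp only [max_def, min_def]; split_ifs <;> linarith
    rw [indicator_of_mem hs, xst, if_pos hst]
    linarith
  · have h := hf.jumpSum_le_jumpSum_Iio_add hu.1 hsut fun h => absurd h hs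
    have : max (f u - infIcc f s t) 0 ≤ d := max_le (by linarith) hd.le
    rw [indicator_of_notMem hs]
    linarith

theorem jumpSum_Iio_add_xst_le (hf : IsExcursion f) (hs : s ∈ S) (hpre : pre f s u) :
    jumpSum f (S ∩ Iio s) s + xst f s u ≤ jumpSum f S u := by
  have h1 := hf.jumpSum_le_jumpSum_add (S := S ∩ Iio s) (w := lm f s) hpre.1
    fun r hr _ => hf.infIcc_le_lm hr.2 le_rfl
  have h2 := hf.jumpSum_mono (inter_subset_left (s := S ∩ Iio s) (t := Iic s)) u
  have h3 : xst f s u ≤ jumpSum f (S \ Iio s) u := by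
    have := (hf.summable_indicator_xst (S \ Iio s) u).le_tsum s
      fun r _ => indicator_nonneg (fun r _ => xst_nonneg f r u) r
    rwa [indicator_of_mem (show s ∈ S \ Iio s from ⟨hs, lt_irrefl s⟩)] at this
  have h4 := hf.jumpSum_inter_add_diff S (Iio s) u
  rw [max_eq_right (sub_nonpos.2 hpre.2)] at h1
  linarith

theorem xst_jumpSum (hf : IsExcursion f) (S : Set ℝ) (s t : ℝ) :
    xst (jumpSum f S) s t = S.indicator (fun r => xst f r t) s := by
  rcases lt_or_ge t s with hts | hst
  · simp [xst_of_lt _ hts, indicator_apply]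
  rw [xst, if_pos hst, hf.lm_jumpSum]
  have hup := hf.infIcc_jumpSum_le S hst
  by_cases h : s ∈ S ∧ pre f s t
  · have hlow : jumpSum f (S ∩ Iio s) s + xst f s t ≤ infIcc (jumpSum f S) s t :=
      le_infIcc hst fun u hu => (add_le_add le_rfl (hf.xst_anti hu.1 hu.2)).trans
        (hf.jumpSum_Iio_add_xst_le h.1
          ⟨hu.1, h.2.2.trans (hf.infIcc_le_infIcc_right hu.1 hu.2)⟩)
    rw [indicator_of_mem h.1] at hup ⊢
    rw [max_eq_left (by linarith [xst_nonneg f s t])]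
    linarith
  · have h0 : S.indicator (fun r => xst f r t) s = 0 := by
      by_cases hs : s ∈ S
      · rw [indicator_of_mem hs]
        exact xst_eq_zero_of_not_pre fun hp => h ⟨hs, hp⟩
      · exact indicator_of_notMem hs _
    rw [h0] at hup ⊢
    exact max_eq_right (by linarith)

theorem isPJG_jumpSum (hf : IsExcursion f) (S : Set ℝ) : IsPJG (jumpSum f S) := fun t _ => by
  rw [Jop_eq_tsum_xst]
  exact tsum_congr fun r => (hf.xst_jumpSum S r t).symm

theorem lm_sSup_eq_zero (hf : IsExcursion f) {A : Set ℝ} (hne : A.Nonempty) (hbdd : BddAbove A)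
    (hA : ∀ r ∈ A, lm f r = 0) : lm f (sSup A) = 0 := by
  refine le_antisymm (not_lt.1 fun hpos => ?_) (hf.lm_nonneg _)
  obtain ⟨l, hl, hfl⟩ := mem_nhdsLT_iff_exists_Ioo_subset.1
    ((tendsto_order.1 (hf.tendsto_lm (sSup A))).1 (lm f (sSup A) / 2) (by linarith))
  obtain ⟨r, hrA, hlr⟩ := exists_lt_of_lt_csSup hne hl
  rcases (le_csSup hbdd hrA).lt_or_eq with hr | hr
  · have : lm f (sSup A) / 2 ≤ lm f r := ge_of_tendsto (hf.tendsto_lm r) <| by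
      filter_upwards [Ioo_mem_nhdsLT hlr] with u hu
      exact (hfl ⟨hu.1, hu.2.trans hr⟩).le
    linarith [hA r hrA]
  · linarith [hr ▸ hA r hrA]

theorem pre_zero (hf : IsExcursion f) (ht : 0 ≤ t) : pre f 0 t :=
  ⟨ht, by rw [lm, if_pos rfl]; exact hf.infIcc_nonneg 0 t⟩

theorem lm_eq_zero_of_pre_one (hf : IsExcursion f) (h : pre f r 1) : lm f r = 0 :=
  le_antisymm (h.2.trans_eq (hf.infIcc_eq_zero h.1 le_rfl hf.one)) (hf.lm_nonneg r)

theorem mrca_one_le (hf : IsExcursion f) (ht : 0 ≤ t) : mrca f t 1 ≤ t :=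
  csSup_le ⟨0, le_rfl, hf.pre_zero ht, hf.pre_zero zero_le_one⟩ fun _ hr => hr.2.1.1

theorem lm_mrca_one (hf : IsExcursion f) (ht : 0 ≤ t) : lm f (mrca f t 1) = 0 :=
  hf.lm_sSup_eq_zero ⟨0, le_rfl, hf.pre_zero ht, hf.pre_zero zero_le_one⟩
    ⟨t, fun _ hr => hr.2.1.1⟩ fun _ hr => hf.lm_eq_zero_of_pre_one hr.2.2

theorem dTanc_eq_sub_Jop (hf : IsExcursion f) {m : ℝ} (hmt : m ≤ t) (hm : lm f m = 0) :
    dTanc f m t = f t - Jop f t := by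
  have hIoi : (∑' r, if pre f m r ∧ m < r ∧ pre f r t then xst f r t else 0)
      = jumpSum f (Ioi m) t := by
    refine tsum_congr fun r => ?_
    by_cases hmr : m < r
    · have hpre : pre f m r := ⟨hmr.le, hm ▸ hf.infIcc_nonneg m r⟩
      simp [hmr, hpre, ite_pre_xst]
    · simp [hmr]
  have hIic : jumpSum f (Iic m) t = infIcc f m t := by
    rw [jumpSum, tsum_eq_single m]
    · simp [xst, hmt, hm, hf.infIcc_nonneg]
    · intro r hrm
      by_cases hr : r ∈ Iic m
      · rw [indicator_of_mem hr, xst, if_pos (hr.out.trans hmt)]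
        have := hf.infIcc_le_lm (lt_of_le_of_ne hr hrm) hmt
        exact max_eq_right (by linarith [hf.lm_nonneg r])
      · exact indicator_of_notMem hr _
  have hsplit := hf.jumpSum_inter_add_diff univ (Iic m) t
  rw [univ_inter, ← compl_eq_univ_sdiff, compl_Iic] at hsplit
  rw [dTanc, hIoi, Jop_eq_jumpSum, ← hsplit, hIic]
  ring

theorem dTanc_one (hf : IsExcursion f) {m : ℝ} (hm : m ≤ 1) : dTanc f m 1 = 0 := by
  have hx (r : ℝ) : xst f r 1 = 0 :=
    (le_or_gt r 1).elim (fun h => hf.xst_eq_zero h le_rfl hf.one) (xst_of_lt f)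
  simp [dTanc, hf.one, hf.infIcc_eq_zero hm le_rfl hf.one, hx]

theorem dT_one (hf : IsExcursion f) (ht : t ∈ Icc (0:ℝ) 1) : dT f t 1 = f t - Jop f t := by
  rw [dT, hf.dTanc_eq_sub_Jop (hf.mrca_one_le ht.1) (hf.lm_mrca_one ht.1),
    hf.dTanc_one ((hf.mrca_one_le ht.1).trans ht.2), add_zero]

end IsExcursion

theorem statement9_general (f : ℝ → ℝ) (hf : IsExcursion f) (ε : ℝ) :
    (∀ t ∈ Icc (0:ℝ) 1, dT f t 1 = f t - Jop f t) ∧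
    IsExcursion (fun t => f t - Jop f t) ∧
    (∀ t ∈ Icc (0:ℝ) 1, jump (fun u => f u - Jop f u) t = 0) ∧
    IsExcursion (Jop f) ∧ IsPJG (Jop f) ∧
    IsExcursion (Jeps f ε) ∧ IsPJG (Jeps f ε) ∧
    (∀ t ∈ Icc (0:ℝ) 1, jump (Jop f) t = jump f t) ∧
    (∀ t ∈ Icc (0:ℝ) 1, jump (Jeps f ε) t = if ε ≤ jump f t then jump f t else 0) ∧
    (∀ t ∈ Icc (0:ℝ) 1, 0 < jump (Jeps f ε) t → ε ≤ jump (Jeps f ε) t) ∧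
    (∀ s ∈ Icc (0:ℝ) 1, ∀ t ∈ Icc (0:ℝ) 1, xst (Jop f) s t = xst f s t) := by
  refine ⟨fun t ht => hf.dT_one ht, ?_⟩
  rw [Jop_eq_jumpSum, Jeps_eq_jumpSum]
  have hjumpε (t : ℝ) :
      jump (jumpSum f {r | ε ≤ jump f r}) t = if ε ≤ jump f t then jump f t else 0 := by
    simp only [hf.jump_jumpSum, indicator_apply, mem_ofPred_eq]
  refine ⟨hf.isExcursion_sub_jumpSum univ, fun t _ => ?_, hf.isExcursion_jumpSum univ,
    hf.isPJG_jumpSum univ, hf.isExcursion_jumpSum _, hf.isPJG_jumpSum _,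
    fun t _ => by simp [hf.jump_jumpSum], fun t _ => hjumpε t, fun t _ hpos => ?_,
    fun s _ t _ => by simp [hf.xst_jumpSum]⟩
  · rw [hf.jump_sub (hf.isExcursion_jumpSum univ), hf.jump_jumpSum, indicator_univ, sub_self]
  · rw [hjumpε] at hpos ⊢
    split_ifs at hpos ⊢ with hε
    exacts [hε, hpos.false.elim]

theorem statement9 (f : ℝ → ℝ) (hf : IsExcursion f) (ε : ℝ) (hε : 0 < ε) :
    (∀ t ∈ Icc (0:ℝ) 1, dT f t 1 = f t - Jop f t) ∧
    IsExcursion (fun t => f t - Jop f t) ∧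
    (∀ t ∈ Icc (0:ℝ) 1, jump (fun u => f u - Jop f u) t = 0) ∧
    IsExcursion (Jop f) ∧ IsPJG (Jop f) ∧
    IsExcursion (Jeps f ε) ∧ IsPJG (Jeps f ε) ∧
    (∀ t ∈ Icc (0:ℝ) 1, jump (Jop f) t = jump f t) ∧
    (∀ t ∈ Icc (0:ℝ) 1, jump (Jeps f ε) t = if ε ≤ jump f t then jump f t else 0) ∧
    (∀ t ∈ Icc (0:ℝ) 1, 0 < jump (Jeps f ε) t → ε ≤ jump (Jeps f ε) t) ∧
    (∀ s ∈ Icc (0:ℝ) 1, ∀ t ∈ Icc (0:ℝ) 1, xst (Jop f) s t = xst f s t) :=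
  statement9_general f hf ε
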